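/- arXiv:1106.4852 — 2 statements merged into one kernel-verified Lean document; each statement's English description precedes it below -/
import Mathlib

section
/- Let f₁, f₂ : ℝ → ℂ be measurable, let C > 0 and α ∈ (1/2, 1], and suppose that ∫₀^T |fᵢ(s)|² ds ≤ C·T^{1−α} for every T > 0 and i = 1,2. Then for every T ≥ 1, ∫₀¹ (∫₁^T |f₁(t)|²·|f₂(θt)|² dt) dθ ≤ C²·(α − (1−α)·T^{1−2α})/(2α − 1). -/
open MeasureTheory Set
open scoped ENNReal

/-!
Substituting `u = θ t` turns the inner `θ`-integral into `t⁻¹ ∫₀ᵗ |f₂|² ≤ C t^(-α)`, so after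
swapping the integrals it suffices to bound `∫₁ᵀ |f₁(t)|² t^(-α) dt`. Writing
`t^(-α) = T^(-α) + α ∫ₜᵀ s^(-α-1) ds` and applying Tonelli (an integration by parts against the
growth bound for `f₁`) bounds this by `C T^(1-2α) + α C ∫₁ᵀ s^(-2α) ds`, which evaluates to the
claimed bound divided by `C`.
-/

theorem setLIntegral_Icc_comp_mul_right (g : ℝ → ℝ≥0∞) (a b : ℝ) {t : ℝ} (ht : 0 < t) :
    ∫⁻ θ in Icc a b, g (θ * t) = ENNReal.ofReal t⁻¹ * ∫⁻ u in Icc (a * t) (b * t), g u := by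
  rw [← image_mul_right_Icc' a b ht,
    lintegral_image_eq_lintegral_abs_deriv_mul measurableSet_Icc
      (fun x _ => (hasDerivAt_mul_const t).hasDerivWithinAt) (mul_left_injective₀ ht.ne').injOn,
    lintegral_const_mul' _ _ ENNReal.ofReal_ne_top, ← mul_assoc,
    ← ENNReal.ofReal_mul (by positivity), abs_of_pos ht, inv_mul_cancel₀ ht.ne',
    ENNReal.ofReal_one, one_mul]

theorem setLIntegral_Icc_zero_one_comp_mul_right_le {g : ℝ → ℝ≥0∞} {C α t : ℝ} (hC : 0 ≤ C)
    (ht : 0 < t) (h_growth : ∫⁻ u in Ioc 0 t, g u ≤ ENNReal.ofReal (C * t ^ (1 - α))) :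
    ∫⁻ θ in Icc 0 1, g (θ * t) ≤ ENNReal.ofReal C * ENNReal.ofReal (t ^ (-α)) := by
  rw [setLIntegral_Icc_comp_mul_right g 0 1 ht, zero_mul, one_mul,
    ← setLIntegral_congr Ioc_ae_eq_Icc]
  calc ENNReal.ofReal t⁻¹ * ∫⁻ u in Ioc 0 t, g u
      ≤ ENNReal.ofReal t⁻¹ * ENNReal.ofReal (C * t ^ (1 - α)) := by gcongr
    _ = ENNReal.ofReal C * ENNReal.ofReal (t ^ (-α)) := by
      rw [← ENNReal.ofReal_mul (by positivity), ← ENNReal.ofReal_mul hC, ← Real.rpow_neg_one,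
        mul_left_comm, ← Real.rpow_add ht]
      ring_nf

theorem setLIntegral_Ioc_ofReal_rpow {a b r : ℝ} (ha : 0 < a) (hab : a ≤ b) (hr : r ≠ -1) :
    ∫⁻ s in Ioc a b, ENNReal.ofReal (s ^ r)
      = ENNReal.ofReal ((b ^ (r + 1) - a ^ (r + 1)) / (r + 1)) := by
  have h0 : (0:ℝ) ∉ uIcc a b := notMem_uIcc_of_lt ha (ha.trans_le hab)
  rw [← ofReal_integral_eq_lintegral_ofReal, ← intervalIntegral.integral_of_le hab,
    integral_rpow (Or.inr ⟨hr, h0⟩)]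
  · exact (intervalIntegrable_iff_integrableOn_Ioc_of_le hab).1
      (intervalIntegral.intervalIntegrable_rpow (Or.inr h0))
  · filter_upwards [ae_restrict_mem measurableSet_Ioc] with s hs
    exact Real.rpow_nonneg (ha.trans hs.1).le r

theorem ofReal_rpow_neg_eq_add_lintegral {t T α : ℝ} (ht : 0 < t) (htT : t ≤ T) (hα : 0 < α) :
    ENNReal.ofReal (t ^ (-α))
      = ENNReal.ofReal (T ^ (-α))
        + ENNReal.ofReal α * ∫⁻ s in Ioc t T, ENNReal.ofReal (s ^ (-α - 1)) := by
  rw [setLIntegral_Ioc_ofReal_rpow ht htT (by linarith), sub_add_cancel,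
    ← ENNReal.ofReal_mul hα.le, ← ENNReal.ofReal_add (Real.rpow_nonneg (ht.le.trans htT) _)]
  · congr 1
    field_simp
    ring
  · exact mul_nonneg hα.le (div_nonneg_of_nonpos
      (sub_nonpos.2 (Real.rpow_le_rpow_of_nonpos ht htT (by linarith))) (by linarith))

theorem setLIntegral_mul_setLIntegral_Ioc_comm {φ ψ : ℝ → ℝ≥0∞} (hφ : Measurable φ)
    (hψ : Measurable ψ) (a T : ℝ) :
    ∫⁻ t in Ioc a T, φ t * ∫⁻ s in Ioc t T, ψ s = ∫⁻ s in Ioc a T, ψ s * ∫⁻ t in Ioo a s, φ t := by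
  set K : ℝ → ℝ → ℝ≥0∞ := fun t s => (Ioi t).indicator (fun s => φ t * ψ s) s
  have hK_meas : Measurable (Function.uncurry K) := by
    have : Function.uncurry K = {p : ℝ × ℝ | p.1 < p.2}.indicator fun p => φ p.1 * ψ p.2 := by
      ext p; simp only [K, Function.uncurry, indicator_apply, mem_Ioi, mem_ofPred_eq]
    rw [this]
    exact ((hφ.comp measurable_fst).mul (hψ.comp measurable_snd)).indicator
      (measurableSet_lt measurable_fst measurable_snd)
  have h_left : ∀ t ∈ Ioc a T, φ t * ∫⁻ s in Ioc t T, ψ s = ∫⁻ s in Ioc a T, K t s := by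
    intro t ht
    rw [setLIntegral_indicator measurableSet_Ioi, lintegral_const_mul _ hψ, inter_comm,
      Ioc_inter_Ioi, sup_eq_right.2 ht.1.le]
  have h_right : ∀ s ∈ Ioc a T, ψ s * ∫⁻ t in Ioo a s, φ t = ∫⁻ t in Ioc a T, K t s := by
    intro s hs
    have hK : ∀ t, K t s = (Iio s).indicator (fun t => φ t * ψ s) t := fun t => by
      simp only [K, indicator_apply, mem_Ioi, mem_Iio]
    have h_set : Iio s ∩ Ioc a T = Ioo a s := by
      ext t
      simp only [mem_inter_iff, mem_Iio, mem_Ioc, mem_Ioo]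
      exact ⟨fun h => ⟨h.2.1, h.1⟩, fun h => ⟨h.2, h.1, h.2.le.trans hs.2⟩⟩
    simp_rw [hK]
    rw [setLIntegral_indicator measurableSet_Iio, lintegral_mul_const _ hφ, mul_comm, h_set]
  rw [setLIntegral_congr_fun measurableSet_Ioc h_left,
    setLIntegral_congr_fun measurableSet_Ioc h_right,
    lintegral_lintegral_swap hK_meas.aemeasurable]

theorem setLIntegral_mul_rpow_neg_eq {φ : ℝ → ℝ≥0∞} (hφ : Measurable φ) {a T α : ℝ}
    (ha : 0 ≤ a) (hα : 0 < α) :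
    ∫⁻ t in Ioc a T, φ t * ENNReal.ofReal (t ^ (-α))
      = ENNReal.ofReal (T ^ (-α)) * (∫⁻ t in Ioc a T, φ t)
        + ENNReal.ofReal α *
          ∫⁻ s in Ioc a T, ENNReal.ofReal (s ^ (-α - 1)) * ∫⁻ t in Ioo a s, φ t := by
  have h_pt : ∀ t ∈ Ioc a T, φ t * ENNReal.ofReal (t ^ (-α))
      = ENNReal.ofReal (T ^ (-α)) * φ t
        + ENNReal.ofReal α * (φ t * ∫⁻ s in Ioc t T, ENNReal.ofReal (s ^ (-α - 1))) := by
    intro t ht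
    rw [ofReal_rpow_neg_eq_add_lintegral (ha.trans_lt ht.1) ht.2 hα]
    ring
  rw [setLIntegral_congr_fun measurableSet_Ioc h_pt, lintegral_add_left (hφ.const_mul _),
    lintegral_const_mul' _ _ ENNReal.ofReal_ne_top,
    lintegral_const_mul' _ _ ENNReal.ofReal_ne_top,
    setLIntegral_mul_setLIntegral_Ioc_comm hφ (by fun_prop)]

theorem setLIntegral_Ioc_one_mul_rpow_neg_le {φ : ℝ → ℝ≥0∞} (hφ : Measurable φ) {C α T : ℝ}
    (hC : 0 ≤ C) (hα : 1 / 2 < α) (hT : 1 ≤ T)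
    (h_growth : ∀ s, 0 < s → ∫⁻ t in Ioc 0 s, φ t ≤ ENNReal.ofReal (C * s ^ (1 - α))) :
    ∫⁻ t in Ioc 1 T, φ t * ENNReal.ofReal (t ^ (-α))
      ≤ ENNReal.ofReal (C * (α - (1 - α) * T ^ (1 - 2 * α)) / (2 * α - 1)) := by
  have hT₀ : 0 < T := one_pos.trans_le hT
  have h_first : ∫⁻ t in Ioc 1 T, φ t ≤ ENNReal.ofReal (C * T ^ (1 - α)) :=
    (lintegral_mono_set (Ioc_subset_Ioc_left zero_le_one)).trans (h_growth T hT₀)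
  have h_inner : ∀ s ∈ Ioc 1 T, ENNReal.ofReal (s ^ (-α - 1)) * ∫⁻ t in Ioo 1 s, φ t
      ≤ ENNReal.ofReal C * ENNReal.ofReal (s ^ (-(2 * α))) := by
    intro s hs
    have hs₀ : 0 < s := one_pos.trans hs.1
    calc ENNReal.ofReal (s ^ (-α - 1)) * ∫⁻ t in Ioo 1 s, φ t
        ≤ ENNReal.ofReal (s ^ (-α - 1)) * ENNReal.ofReal (C * s ^ (1 - α)) := by
          gcongr
          exact (lintegral_mono_set (Ioo_subset_Ioc_self.trans
            (Ioc_subset_Ioc_left zero_le_one))).trans (h_growth s hs₀)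
      _ = ENNReal.ofReal C * ENNReal.ofReal (s ^ (-(2 * α))) := by
          rw [← ENNReal.ofReal_mul (by positivity), ← ENNReal.ofReal_mul hC, mul_left_comm,
            ← Real.rpow_add hs₀]
          ring_nf
  have h_second : ∫⁻ s in Ioc 1 T, ENNReal.ofReal (s ^ (-α - 1)) * ∫⁻ t in Ioo 1 s, φ t
      ≤ ENNReal.ofReal C * ENNReal.ofReal ((T ^ (1 - 2 * α) - 1) / (1 - 2 * α)) := by
    refine (setLIntegral_mono' measurableSet_Ioc h_inner).trans_eq ?_
    rw [lintegral_const_mul' _ _ ENNReal.ofReal_ne_top,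
      setLIntegral_Ioc_ofReal_rpow one_pos hT (by linarith), Real.one_rpow]
    ring_nf
  have h_power : T ^ (-α) * T ^ (1 - α) = T ^ (1 - 2 * α) := by
    rw [← Real.rpow_add hT₀]; ring_nf
  have h_second_nonneg : 0 ≤ (T ^ (1 - 2 * α) - 1) / (1 - 2 * α) :=
    div_nonneg_of_nonpos (sub_nonpos.2 (Real.rpow_le_one_of_one_le_of_nonpos hT (by linarith)))
      (by linarith)
  rw [setLIntegral_mul_rpow_neg_eq hφ zero_le_one (by linarith)]
  calc _ ≤ ENNReal.ofReal (T ^ (-α)) * ENNReal.ofReal (C * T ^ (1 - α))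
        + ENNReal.ofReal α *
          (ENNReal.ofReal C * ENNReal.ofReal ((T ^ (1 - 2 * α) - 1) / (1 - 2 * α))) := by
        gcongr
    _ = _ := by
        rw [← ENNReal.ofReal_mul hC, ← ENNReal.ofReal_mul (by positivity),
          ← ENNReal.ofReal_mul (by positivity),
          ← ENNReal.ofReal_add (by positivity) (by positivity)]
        congr 1
        rw [mul_left_comm, h_power]
        have h₁ : 1 - 2 * α ≠ 0 := by linarith
        have h₂ : 2 * α - 1 ≠ 0 := by linarith
        field_simp
        ring

/-- If `f₁, f₂ : ℝ → ℂ` are measurable and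
`∫₀^T |fᵢ(s)|² ds ≤ C T^(1-α)` for every `T > 0` and `i = 1, 2` (with `C > 0`,
`α ∈ (1/2, 1]`), then for every `T ≥ 1`,
`∫₀¹ ∫₁^T |f₁(t)|² |f₂(θt)|² dt dθ ≤ C² (α - (1-α) T^(1-2α))/(2α-1)`. -/
theorem double_integral_L2_bound
    (f₁ f₂ : ℝ → ℂ) (hf₁ : Measurable f₁) (hf₂ : Measurable f₂)
    (C α : ℝ) (hC : 0 < C) (hα : α ∈ Set.Ioc (1/2 : ℝ) 1)
    (hbound₁ : ∀ T : ℝ, 0 < T →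
      (∫⁻ s in Ioc (0:ℝ) T, ENNReal.ofReal (‖f₁ s‖ ^ 2)) ≤ ENNReal.ofReal (C * T ^ (1 - α)))
    (hbound₂ : ∀ T : ℝ, 0 < T →
      (∫⁻ s in Ioc (0:ℝ) T, ENNReal.ofReal (‖f₂ s‖ ^ 2)) ≤ ENNReal.ofReal (C * T ^ (1 - α))) :
    ∀ T : ℝ, 1 ≤ T →
      (∫⁻ θ in Icc (0:ℝ) 1, ∫⁻ t in Icc (1:ℝ) T,
          ENNReal.ofReal (‖f₁ t‖ ^ 2 * ‖f₂ (θ * t)‖ ^ 2))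
        ≤ ENNReal.ofReal (C ^ 2 * (α - (1 - α) * T ^ (1 - 2 * α)) / (2 * α - 1)) := by
  intro T hT
  set g₁ : ℝ → ℝ≥0∞ := fun x => ENNReal.ofReal (‖f₁ x‖ ^ 2)
  set g₂ : ℝ → ℝ≥0∞ := fun x => ENNReal.ofReal (‖f₂ x‖ ^ 2)
  have hg₁ : Measurable g₁ := by fun_prop
  have h_split : ∀ θ t, ENNReal.ofReal (‖f₁ t‖ ^ 2 * ‖f₂ (θ * t)‖ ^ 2) = g₁ t * g₂ (θ * t) :=
    fun θ t => ENNReal.ofReal_mul (by positivity)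
  have h_inner : ∀ t ∈ Ioc 1 T, g₁ t * ∫⁻ θ in Icc 0 1, g₂ (θ * t)
      ≤ g₁ t * (ENNReal.ofReal C * ENNReal.ofReal (t ^ (-α))) := fun t ht => by
    have ht₀ : 0 < t := one_pos.trans ht.1
    gcongr
    exact setLIntegral_Icc_zero_one_comp_mul_right_le hC.le ht₀ (hbound₂ t ht₀)
  simp_rw [h_split]
  rw [lintegral_lintegral_swap (by fun_prop), ← setLIntegral_congr Ioc_ae_eq_Icc]
  calc ∫⁻ t in Ioc 1 T, ∫⁻ θ in Icc 0 1, g₁ t * g₂ (θ * t)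
      = ∫⁻ t in Ioc 1 T, g₁ t * ∫⁻ θ in Icc 0 1, g₂ (θ * t) :=
        lintegral_congr fun t => lintegral_const_mul' _ _ ENNReal.ofReal_ne_top
    _ ≤ ∫⁻ t in Ioc 1 T, g₁ t * (ENNReal.ofReal C * ENNReal.ofReal (t ^ (-α))) :=
        setLIntegral_mono' measurableSet_Ioc h_inner
    _ = ENNReal.ofReal C * ∫⁻ t in Ioc 1 T, g₁ t * ENNReal.ofReal (t ^ (-α)) := by
        rw [← lintegral_const_mul' _ _ ENNReal.ofReal_ne_top]
        simp_rw [mul_left_comm]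
    _ ≤ ENNReal.ofReal C *
          ENNReal.ofReal (C * (α - (1 - α) * T ^ (1 - 2 * α)) / (2 * α - 1)) := by
        gcongr
        exact setLIntegral_Ioc_one_mul_rpow_neg_le hg₁ hC.le hα.1 hT hbound₁
    _ = _ := by
        rw [← ENNReal.ofReal_mul hC.le]
        ring_nf
end

section
/- Let α > 1/2 and let μ₁, μ₂ be finite Borel measures on ℝ, each uniformly α-Hölder continuous. Then for Lebesgue-almost every θ ∈ (0,1], the convolution μ₁ ∗ (S_θ μ₂) is absolutely continuous with respect to Lebesgue measure on ℝ. -/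
/-!
Write `μ₁ ∗ S_θ μ₂` as the image `κ_θ` of `μ₁ × μ₂` under `(x, y) ↦ x + θ y`, and lower `α` so
that `1/2 < α < 1`. Two points `(x, y)`, `(a, b)` have `ε`-close images only for `θ` in an interval
of length `2ε / |y - b|`, and only if `|x - a| ≤ |y - b| + ε`. Integrating first against `μ₁`
(whose balls have mass `≲ r ^ α`) and then against `μ₂` (whose `(1 - α)`-energy is finite because
`1 - α < α`) bounds the correlation integral `∫ κ_θ(B(x, ε)) dκ_θ(x)`, averaged over `θ ∈ (0, 1]`,
by `O(ε)`. By Fatou's lemma, for almost every `θ` the lower density of `κ_θ` is finite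
`κ_θ`-almost everywhere, so `κ_θ ≪ volume` by Besicovitch's differentiation theorem.
-/

open MeasureTheory Set

/-- A finite Borel measure `μ` on `ℝ` is uniformly `α`-Hölder continuous if there is a
constant `C > 0` with `μ(J) ≤ C |J|^α` for every interval `J` of length `< 1`. -/
def UniformlyHolder (α : ℝ) (μ : Measure ℝ) : Prop :=
  ∃ C : ℝ, 0 < C ∧ ∀ a b : ℝ, a ≤ b → b - a < 1 →
    μ (Set.Icc a b) ≤ ENNReal.ofReal (C * (b - a) ^ α)

open Filter Metric
open scoped ENNReal NNReal Topology

namespace UniformlyHolder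

variable {α β : ℝ} {μ : Measure ℝ}

lemma mono_exponent (hβ : 0 ≤ β) (hβα : β ≤ α) (h : UniformlyHolder α μ) : UniformlyHolder β μ := by
  obtain ⟨C, hC, hH⟩ := h
  refine ⟨C, hC, fun a b hab hba => (hH a b hab hba).trans (ENNReal.ofReal_le_ofReal ?_)⟩
  exact mul_le_mul_of_nonneg_left
    (Real.rpow_le_rpow_of_exponent_ge' (sub_nonneg.2 hab) hba.le hβ hβα) hC.le

/-- Balls of radius `r < 1/2` are intervals of length `< 1`; larger balls are controlled by the
total mass, since then `(2 r) ^ α ≥ 1`. -/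
lemma exists_measure_closedBall_le [IsFiniteMeasure μ] (hα : 0 ≤ α) (h : UniformlyHolder α μ) :
    ∃ C : ℝ≥0, ∀ x r, 0 ≤ r → μ (closedBall x r) ≤ C * ENNReal.ofReal (r ^ α) := by
  obtain ⟨C, hC, hH⟩ := h
  have hball : ∀ x r, 0 ≤ r →
      μ (closedBall x r) ≤ (ENNReal.ofReal C + μ univ) * ENNReal.ofReal ((2 * r) ^ α) := by
    intro x r hr
    rcases lt_or_ge (2 * r) 1 with hr1 | hr1
    · calc μ (closedBall x r) ≤ ENNReal.ofReal (C * (2 * r) ^ α) := by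
            rw [Real.closedBall_eq_Icc]
            convert hH (x - r) (x + r) (by linarith) (by linarith) using 4
            ring
        _ = ENNReal.ofReal C * ENNReal.ofReal ((2 * r) ^ α) := ENNReal.ofReal_mul hC.le
        _ ≤ _ := by gcongr; exact le_self_add
    · calc μ (closedBall x r) ≤ μ univ * 1 := by rw [mul_one]; exact measure_mono (subset_univ _)
        _ ≤ _ := by
          gcongr
          · exact le_add_self
          · exact ENNReal.one_le_ofReal.2 (Real.one_le_rpow hr1 hα)
  lift (ENNReal.ofReal C + μ univ) * ENNReal.ofReal (2 ^ α) to ℝ≥0 using (by finiteness)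
    with C' hC'
  refine ⟨C', fun x r hr => (hball x r hr).trans_eq ?_⟩
  rw [hC', Real.mul_rpow zero_le_two hr, ENNReal.ofReal_mul (by positivity), mul_assoc]

end UniformlyHolder

section MetricSpace

variable {X : Type*} [PseudoMetricSpace X]

lemma setOf_le_dist_rpow_neg_subset {s t : ℝ} (hs : 0 < s) (ht : 0 < t) (b : X) :
    {y | t ≤ dist y b ^ (-s)} ⊆ closedBall b (t ^ (-s⁻¹)) := by
  intro y (hy : t ≤ dist y b ^ (-s))
  have hyb : 0 < dist y b := by
    refine (dist_nonneg).lt_of_ne fun h => ?_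
    rw [← h, Real.zero_rpow (neg_ne_zero.2 hs.ne')] at hy
    exact ht.not_ge hy
  calc dist y b = (dist y b ^ (-s)) ^ (-s⁻¹) := by
        rw [← Real.rpow_mul hyb.le, neg_mul_neg, mul_inv_cancel₀ hs.ne', Real.rpow_one]
    _ ≤ t ^ (-s⁻¹) := Real.rpow_le_rpow_of_nonpos ht hy (by simpa using hs.le)

variable [MeasurableSpace X] {μ : Measure X} {α : ℝ} {C : ℝ≥0}

lemma nullSingletonClass_of_measure_closedBall_le (hα : 0 < α)
    (hμ : ∀ x r, 0 ≤ r → μ (closedBall x r) ≤ C * ENNReal.ofReal (r ^ α)) :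
    NullSingletonClass μ := by
  refine ⟨fun x => le_antisymm ?_ bot_le⟩
  have hlim : Tendsto (fun r : ℝ => C * ENNReal.ofReal (r ^ α)) (𝓝[>] 0) (𝓝 0) := by
    have := ENNReal.Tendsto.const_mul ((ENNReal.continuous_ofReal.comp
      (Real.continuous_rpow_const hα.le)).tendsto 0) (Or.inr (ENNReal.coe_ne_top (r := C)))
    simpa [Real.zero_rpow hα.ne'] using this.mono_left nhdsWithin_le_nhds
  refine ge_of_tendsto hlim (eventually_nhdsWithin_of_forall fun r (hr : 0 < r) => ?_)
  exact (measure_mono (singleton_subset_iff.2 (mem_closedBall_self hr.le))).trans (hμ x r hr.le)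

/-- Frostman's lemma, by the layer-cake formula: above height `1` the integrand is at most
`C t ^ (-α / s)`, which is integrable since `s < α`. -/
lemma lintegral_dist_rpow_neg_le [OpensMeasurableSpace X] [IsFiniteMeasure μ] {s : ℝ} (hs : 0 < s)
    (hsα : s < α) (hμ : ∀ x r, 0 ≤ r → μ (closedBall x r) ≤ C * ENNReal.ofReal (r ^ α)) (b : X) :
    ∫⁻ y, ENNReal.ofReal (dist y b ^ (-s)) ∂μ ≤ μ univ + C * ENNReal.ofReal (s / (α - s)) := by
  have hp : -α / s < -1 := by rw [div_lt_iff₀ hs]; linarith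
  rw [lintegral_eq_lintegral_meas_le μ (ae_of_all _ fun y => by positivity) (by fun_prop),
    ← Ioc_union_Ioi_eq_Ioi zero_le_one, lintegral_union measurableSet_Ioi Ioc_disjoint_Ioi_same]
  gcongr
  · calc ∫⁻ t in Ioc 0 1, μ {y | t ≤ dist y b ^ (-s)} ≤ ∫⁻ t in Ioc (0 : ℝ) 1, μ univ :=
          lintegral_mono fun t => measure_mono (subset_univ _)
      _ = μ univ := by simp
  · calc ∫⁻ t in Ioi 1, μ {y | t ≤ dist y b ^ (-s)}
        ≤ ∫⁻ t in Ioi 1, C * ENNReal.ofReal (t ^ (-α / s)) := by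
          refine setLIntegral_mono' measurableSet_Ioi fun t (ht : 1 < t) => ?_
          refine (measure_mono (setOf_le_dist_rpow_neg_subset hs (one_pos.trans ht) b)).trans ?_
          refine (hμ b _ (by positivity)).trans_eq ?_
          rw [← Real.rpow_mul (by positivity)]
          congr 3
          field_simp
      _ = C * ENNReal.ofReal (s / (α - s)) := by
          rw [lintegral_const_mul' _ _ ENNReal.coe_ne_top, ← ofReal_integral_eq_lintegral_ofReal
            (integrableOn_Ioi_rpow_of_lt hp one_pos)
            (ae_restrict_of_forall_mem measurableSet_Ioi fun t (ht : 1 < t) =>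
              Real.rpow_nonneg (by linarith) _),
            integral_Ioi_rpow_of_lt hp one_pos, Real.one_rpow]
          have : α - s ≠ 0 := by linarith
          have : -α + s ≠ 0 := by linarith
          congr 2
          field_simp
          ring

end MetricSpace

section Density

variable {X : Type*} [PseudoMetricSpace X] [MeasurableSpace X] [OpensMeasurableSpace X]
  [SecondCountableTopology X]

lemma measurable_measure_closedBall (ρ : Measure X) [SFinite ρ] (r : ℝ) :
    Measurable fun x => ρ (closedBall x r) :=
  measurable_measure_prodMk_left (measurableSet_le (measurable_snd.dist measurable_fst)
    measurable_const)

lemma lintegral_map_measure_closedBall {Y : Type*} [MeasurableSpace Y] (ν : Measure Y) [SFinite ν]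
    {g : Y → X} (hg : Measurable g) (r : ℝ) :
    ∫⁻ x, ν.map g (closedBall x r) ∂ν.map g = ∫⁻ p, ν {q | dist (g q) (g p) ≤ r} ∂ν := by
  rw [lintegral_map (measurable_measure_closedBall _ r) hg]
  refine lintegral_congr fun p => ?_
  rw [Measure.map_apply hg measurableSet_closedBall]
  rfl

end Density

theorem absolutelyContinuous_of_ae_liminf_lt_top {X : Type*} [MetricSpace X] [MeasurableSpace X]
    [BorelSpace X] [SecondCountableTopology X] [HasBesicovitchCovering X] {ρ μ : Measure X}
    [SFinite ρ] [IsLocallyFiniteMeasure μ] {r : ℕ → ℝ} (hr : Tendsto r atTop (𝓝[>] 0))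
    (h : ∀ᵐ x ∂ρ, liminf (fun n => ρ (closedBall x (r n)) / μ (closedBall x (r n))) atTop < ⊤) :
    ρ ≪ μ := by
  intro s hs
  set g : X → ℝ≥0∞ := fun x =>
    liminf (fun n => ρ (closedBall x (r n)) / μ (closedBall x (r n))) atTop
  have hlevel : ∀ m : ℕ, ρ (s ∩ {x | g x < m}) = 0 := by
    intro m
    refine le_antisymm ?_ bot_le
    calc ρ (s ∩ {x | g x < m}) ≤ ((m : ℝ≥0) • μ) (s ∩ {x | g x < m}) := by
          refine (Besicovitch.vitaliFamily ρ).measure_le_of_frequently_le _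
            Measure.AbsolutelyContinuous.rfl _ fun x hx => ?_
          refine ((Besicovitch.tendsto_filterAt ρ x).comp hr).frequently ?_
          have hgx : liminf (fun n => ρ (closedBall x (r n)) / μ (closedBall x (r n))) atTop < m :=
            hx.2
          refine (frequently_lt_of_liminf_lt (by isBoundedDefault) hgx).mono fun n hn => ?_
          have hm : (m : ℝ≥0∞) ≠ 0 := (hn.trans_le' bot_le).ne'
          simpa [mul_comm] using
            (ENNReal.div_le_iff_le_mul (Or.inr (ENNReal.natCast_ne_top m)) (Or.inr hm)).1 hn.le
      _ ≤ ((m : ℝ≥0) • μ) s := measure_mono inter_subset_left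
      _ = 0 := by simp [hs]
  refine measure_mono_null_ae ?_ (measure_iUnion_null hlevel)
  filter_upwards [h] with x hx hxs
  obtain ⟨m, hm⟩ := ENNReal.exists_nat_gt hx.ne
  exact mem_iUnion.2 ⟨m, hxs, hm⟩

lemma ae_lintegral_liminf_lt_top {Θ Y : Type*} [MeasurableSpace Θ] [MeasurableSpace Y]
    {P : Measure Θ} {ν : Measure Y} [SFinite ν] {f : ℕ → Θ → Y → ℝ≥0∞}
    (hf : ∀ n, Measurable (Function.uncurry (f n))) {B : ℝ≥0∞} (hB : B ≠ ⊤)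
    (h : ∀ n, ∫⁻ θ, ∫⁻ y, f n θ y ∂ν ∂P ≤ B) :
    ∀ᵐ θ ∂P, ∫⁻ y, liminf (fun n => f n θ y) atTop ∂ν < ⊤ := by
  refine ae_lt_top (Measurable.liminf hf).lintegral_prod_right' (ne_top_of_le_ne_top hB ?_)
  calc ∫⁻ θ, ∫⁻ y, liminf (fun n => f n θ y) atTop ∂ν ∂P
      ≤ ∫⁻ θ, liminf (fun n => ∫⁻ y, f n θ y ∂ν) atTop ∂P :=
        lintegral_mono fun θ => lintegral_liminf_le fun n => (hf n).comp measurable_prodMk_left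
    _ ≤ liminf (fun n => ∫⁻ θ, ∫⁻ y, f n θ y ∂ν ∂P) atTop :=
        lintegral_liminf_le fun n => (hf n).lintegral_prod_right'
    _ ≤ B := liminf_le_of_frequently_le' (Frequently.of_forall h)

theorem ae_absolutelyContinuous_map_of_lintegral_measure_closedBall_le {Θ Y : Type*}
    [MeasurableSpace Θ] [MeasurableSpace Y] {P : Measure Θ} {ν : Measure Y} [SFinite ν]
    {e : Θ → Y → ℝ} (he : Measurable (Function.uncurry e)) {B : ℝ≥0∞} (hB : B ≠ ⊤)
    (h : ∀ r > 0, ∫⁻ θ, ∫⁻ x, ν.map (e θ) (closedBall x r) ∂ν.map (e θ) ∂P ≤ B * ENNReal.ofReal r) :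
    ∀ᵐ θ ∂P, ν.map (e θ) ≪ volume := by
  set r : ℕ → ℝ := fun n => (1 / 2) ^ n
  have hr : ∀ n, 0 < r n := fun n => by positivity
  have hem : ∀ θ, Measurable (e θ) := fun θ => he.comp measurable_prodMk_left
  set f : ℕ → Θ → Y → ℝ≥0∞ := fun n θ p =>
    (ENNReal.ofReal (2 * r n))⁻¹ * ν {q | dist (e θ q) (e θ p) ≤ r n}
  have hf : ∀ n, Measurable (Function.uncurry (f n)) := fun n =>
    (measurable_measure_prodMk_left (measurableSet_le
      ((he.comp (measurable_fst.fst.prodMk measurable_snd)).dist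
        (he.comp (measurable_fst.fst.prodMk measurable_fst.snd))) measurable_const)).const_mul _
  have hbound : ∀ n, ∫⁻ θ, ∫⁻ p, f n θ p ∂ν ∂P ≤ B := by
    intro n
    have hc : ENNReal.ofReal (2 * r n) ≠ 0 := by simpa using hr n
    calc ∫⁻ θ, ∫⁻ p, f n θ p ∂ν ∂P
        = (ENNReal.ofReal (2 * r n))⁻¹ *
            ∫⁻ θ, ∫⁻ x, ν.map (e θ) (closedBall x (r n)) ∂ν.map (e θ) ∂P := by
          rw [← lintegral_const_mul' _ _ (ENNReal.inv_ne_top.2 hc)]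
          refine lintegral_congr fun θ => ?_
          rw [lintegral_map_measure_closedBall ν (hem θ) (r n),
            ← lintegral_const_mul' _ _ (ENNReal.inv_ne_top.2 hc)]
      _ ≤ (ENNReal.ofReal (2 * r n))⁻¹ * (B * ENNReal.ofReal (2 * r n)) := by
          gcongr
          refine (h _ (hr n)).trans ?_
          gcongr
          linarith [hr n]
      _ = B := by
          rw [mul_comm B, ← mul_assoc, ENNReal.inv_mul_cancel hc ENNReal.ofReal_ne_top, one_mul]
  filter_upwards [ae_lintegral_liminf_lt_top hf hB hbound] with θ hθ
  refine absolutelyContinuous_of_ae_liminf_lt_top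
    (tendsto_pow_atTop_nhdsWithin_zero_of_lt_one (r := (1 / 2 : ℝ)) (by norm_num) (by norm_num)) ?_
  simp_rw [Real.volume_closedBall]
  refine ae_lt_top (Measurable.liminf fun n => (measurable_measure_closedBall _ _).div_const _) ?_
  rw [lintegral_map (Measurable.liminf fun n => (measurable_measure_closedBall _ _).div_const _)
    (hem θ)]
  convert hθ.ne using 4 with p
  funext n
  rw [Measure.map_apply (hem θ) measurableSet_closedBall, ENNReal.div_eq_inv_mul]
  rfl

lemma conv_map_const_mul_eq_map_prod (μ₁ μ₂ : Measure ℝ) [SFinite μ₁] [SFinite μ₂] (θ : ℝ) :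
    Measure.conv μ₁ (Measure.map (fun x : ℝ => θ * x) μ₂) =
      (μ₁.prod μ₂).map (fun p => p.1 + θ * p.2) := by
  have : μ₁.prod (μ₂.map (θ * ·)) = (μ₁.prod μ₂).map (Prod.map id (θ * ·)) := by
    rw [← Measure.map_prod_map _ _ measurable_id (measurable_const_mul θ), Measure.map_id]
  rw [Measure.conv, this, Measure.map_map (by fun_prop) (by fun_prop)]
  rfl

lemma min_one_div_mul_rpow_le {ε t α : ℝ} (hε : 0 ≤ ε) (ht : 0 < t) (hα₀ : 0 ≤ α)
    (hα₁ : α ≤ 1) : min 1 (2 * ε / t) * (t + ε) ^ α ≤ 2 ^ (1 + α) * ε * t ^ (α - 1) := by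
  have h2 : (2 : ℝ) ^ (1 + α) = 2 * 2 ^ α := by rw [Real.rpow_add two_pos, Real.rpow_one]
  rcases le_or_gt t ε with htε | hεt
  · have hε0 : 0 < ε := ht.trans_le htε
    calc min 1 (2 * ε / t) * (t + ε) ^ α ≤ 1 * (2 * ε) ^ α :=
          mul_le_mul (min_le_left _ _) (Real.rpow_le_rpow (by positivity) (by linarith) hα₀)
            (by positivity) zero_le_one
      _ = 2 ^ α * (ε * ε ^ (α - 1)) := by
          rw [one_mul, Real.mul_rpow zero_le_two hε, Real.rpow_sub_one hε0.ne']
          field_simp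
      _ ≤ 2 ^ α * (ε * t ^ (α - 1)) := mul_le_mul_of_nonneg_left (mul_le_mul_of_nonneg_left
          (Real.rpow_le_rpow_of_nonpos ht htε (by linarith)) hε) (by positivity)
      _ ≤ 2 ^ (1 + α) * ε * t ^ (α - 1) := by
          have : 0 ≤ 2 ^ α * (ε * t ^ (α - 1)) := by positivity
          rw [h2]
          linarith
  · calc min 1 (2 * ε / t) * (t + ε) ^ α ≤ 2 * ε / t * (2 * t) ^ α := by
          gcongr
          · exact min_le_right _ _
          · linarith
      _ = 2 ^ (1 + α) * ε * t ^ (α - 1) := by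
          rw [Real.mul_rpow zero_le_two ht.le, Real.rpow_sub_one ht.ne', h2]
          field_simp

lemma volume_restrict_Ioc_dist_add_mul_le {x y a b ε : ℝ} (hyb : y ≠ b) :
    volume.restrict (Ioc 0 1) {θ | dist (x + θ * y) (a + θ * b) ≤ ε} ≤
      (closedBall a (dist y b + ε)).indicator
        (fun _ => ENNReal.ofReal (min 1 (2 * ε / dist y b))) x := by
  rw [Measure.restrict_apply (measurableSet_le (by fun_prop) measurable_const)]
  by_cases hx : x ∈ closedBall a (dist y b + ε)
  · rw [indicator_of_mem hx, ENNReal.ofReal_min, ENNReal.ofReal_one]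
    refine le_min ((measure_mono inter_subset_right).trans (by simp)) ?_
    calc volume ({θ | dist (x + θ * y) (a + θ * b) ≤ ε} ∩ Ioc 0 1)
        ≤ volume ((· * (y - b)) ⁻¹' closedBall (a - x) ε) := by
          refine measure_mono fun θ ⟨(hθ : dist _ _ ≤ ε), _⟩ => ?_
          rw [Real.dist_eq] at hθ
          rw [mem_preimage, mem_closedBall, Real.dist_eq]
          convert hθ using 2
          ring
      _ = ENNReal.ofReal (2 * ε / dist y b) := by
          rw [Real.volume_preimage_mul_right (sub_ne_zero.2 hyb), Real.volume_closedBall,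
            ← ENNReal.ofReal_mul (abs_nonneg _), abs_inv, Real.dist_eq, inv_mul_eq_div]
  · rw [indicator_of_notMem hx, nonpos_iff_eq_zero, ← measure_empty (μ := (volume : Measure ℝ))]
    refine congrArg _ (eq_empty_of_forall_notMem fun θ ⟨hθ, hθ01⟩ => hx ?_)
    have hθyb : |θ * (y - b)| ≤ |y - b| := by
      rw [abs_mul, abs_of_pos hθ01.1]
      exact mul_le_of_le_one_left (abs_nonneg _) hθ01.2
    rw [mem_ofPred_eq, Real.dist_eq] at hθ
    rw [mem_closedBall, Real.dist_eq, Real.dist_eq]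
    calc |x - a| = |(x + θ * y - (a + θ * b)) - θ * (y - b)| := by congr 1; ring
      _ ≤ |x + θ * y - (a + θ * b)| + |θ * (y - b)| := abs_sub _ _
      _ ≤ |y - b| + ε := by linarith

lemma lintegral_volume_restrict_Ioc_dist_add_mul_le {μ : Measure ℝ} {C : ℝ≥0} {α : ℝ}
    (hα₀ : 0 ≤ α) (hα₁ : α ≤ 1)
    (hμ : ∀ x r, 0 ≤ r → μ (closedBall x r) ≤ C * ENNReal.ofReal (r ^ α))
    {y a b ε : ℝ} (hyb : y ≠ b) (hε : 0 ≤ ε) :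
    ∫⁻ x, volume.restrict (Ioc 0 1) {θ | dist (x + θ * y) (a + θ * b) ≤ ε} ∂μ ≤
      C * ENNReal.ofReal (2 ^ (1 + α) * ε * dist y b ^ (α - 1)) := by
  set t := dist y b
  calc ∫⁻ x, volume.restrict (Ioc 0 1) {θ | dist (x + θ * y) (a + θ * b) ≤ ε} ∂μ
      ≤ ∫⁻ x, (closedBall a (t + ε)).indicator (fun _ => ENNReal.ofReal (min 1 (2 * ε / t))) x ∂μ :=
        lintegral_mono fun x => volume_restrict_Ioc_dist_add_mul_le hyb
    _ = ENNReal.ofReal (min 1 (2 * ε / t)) * μ (closedBall a (t + ε)) := by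
        rw [lintegral_indicator measurableSet_closedBall, setLIntegral_const]
    _ ≤ ENNReal.ofReal (min 1 (2 * ε / t)) * (C * ENNReal.ofReal ((t + ε) ^ α)) := by
        gcongr
        exact hμ _ _ (by positivity)
    _ = C * ENNReal.ofReal (min 1 (2 * ε / t) * (t + ε) ^ α) := by
        rw [ENNReal.ofReal_mul (le_min zero_le_one (by positivity))]
        ring
    _ ≤ C * ENNReal.ofReal (2 ^ (1 + α) * ε * t ^ (α - 1)) :=
        mul_le_mul_right
          (ENNReal.ofReal_le_ofReal (min_one_div_mul_rpow_le hε (dist_pos.2 hyb) hα₀ hα₁)) _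

section Projections

variable {μ₁ μ₂ : Measure ℝ} [IsFiniteMeasure μ₁] [IsFiniteMeasure μ₂] [NullSingletonClass μ₂]
  {α : ℝ} {C : ℝ≥0} {L : ℝ≥0∞}

lemma lintegral_prod_volume_restrict_Ioc_dist_le (hα₀ : 0 ≤ α) (hα₁ : α ≤ 1)
    (hμ₁ : ∀ x r, 0 ≤ r → μ₁ (closedBall x r) ≤ C * ENNReal.ofReal (r ^ α))
    (hμ₂ : ∀ b, ∫⁻ y, ENNReal.ofReal (dist y b ^ (α - 1)) ∂μ₂ ≤ L) {ε : ℝ} (hε : 0 ≤ ε)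
    (p : ℝ × ℝ) :
    ∫⁻ q, volume.restrict (Ioc 0 1) {θ | dist (q.1 + θ * q.2) (p.1 + θ * p.2) ≤ ε}
        ∂μ₁.prod μ₂ ≤ C * ENNReal.ofReal (2 ^ (1 + α) * ε) * L := by
  have hmeas : Measurable fun q : ℝ × ℝ =>
      volume.restrict (Ioc 0 1) {θ | dist (q.1 + θ * q.2) (p.1 + θ * p.2) ≤ ε} :=
    measurable_measure_prodMk_left (s := {z : (ℝ × ℝ) × ℝ |
      dist (z.1.1 + z.2 * z.1.2) (p.1 + z.2 * p.2) ≤ ε})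
      (measurableSet_le (by fun_prop) measurable_const)
  calc ∫⁻ q, volume.restrict (Ioc 0 1) {θ | dist (q.1 + θ * q.2) (p.1 + θ * p.2) ≤ ε} ∂μ₁.prod μ₂
      = ∫⁻ y, ∫⁻ x, volume.restrict (Ioc 0 1) {θ | dist (x + θ * y) (p.1 + θ * p.2) ≤ ε} ∂μ₁ ∂μ₂ :=
        lintegral_prod_symm _ hmeas.aemeasurable
    _ ≤ ∫⁻ y, C * ENNReal.ofReal (2 ^ (1 + α) * ε * dist y p.2 ^ (α - 1)) ∂μ₂ :=
        lintegral_mono_ae <| (Measure.ae_ne μ₂ p.2).mono fun y hy =>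
          lintegral_volume_restrict_Ioc_dist_add_mul_le hα₀ hα₁ hμ₁ hy hε
    _ = C * ENNReal.ofReal (2 ^ (1 + α) * ε) * ∫⁻ y, ENNReal.ofReal (dist y p.2 ^ (α - 1)) ∂μ₂ := by
        rw [← lintegral_const_mul' _ _ (by finiteness)]
        refine lintegral_congr fun y => ?_
        rw [ENNReal.ofReal_mul (by positivity), mul_assoc]
    _ ≤ C * ENNReal.ofReal (2 ^ (1 + α) * ε) * L := by
        gcongr
        exact hμ₂ p.2

theorem lintegral_Ioc_lintegral_measure_closedBall_map_le (hα₀ : 0 ≤ α) (hα₁ : α ≤ 1)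
    (hμ₁ : ∀ x r, 0 ≤ r → μ₁ (closedBall x r) ≤ C * ENNReal.ofReal (r ^ α))
    (hμ₂ : ∀ b, ∫⁻ y, ENNReal.ofReal (dist y b ^ (α - 1)) ∂μ₂ ≤ L) {ε : ℝ} (hε : 0 ≤ ε) :
    ∫⁻ θ in Ioc 0 1, ∫⁻ x, (μ₁.prod μ₂).map (fun p => p.1 + θ * p.2) (closedBall x ε)
        ∂(μ₁.prod μ₂).map (fun p => p.1 + θ * p.2) ≤
      μ₁ univ * μ₂ univ * (C * ENNReal.ofReal (2 ^ (1 + α)) * L) * ENNReal.ofReal ε := by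
  set ν := μ₁.prod μ₂
  set P := volume.restrict (Ioc (0 : ℝ) 1)
  have he (θ : ℝ) : Measurable fun p : ℝ × ℝ => p.1 + θ * p.2 := by fun_prop
  have hS : MeasurableSet {z : (ℝ × ℝ × ℝ) × ℝ × ℝ |
      dist (z.2.1 + z.1.1 * z.2.2) (z.1.2.1 + z.1.1 * z.1.2.2) ≤ ε} :=
    measurableSet_le (by fun_prop) measurable_const
  calc ∫⁻ θ in Ioc 0 1, ∫⁻ x, ν.map (fun p => p.1 + θ * p.2) (closedBall x ε)
        ∂ν.map (fun p => p.1 + θ * p.2)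
      = ∫⁻ θ, ∫⁻ p, ν {q | dist (q.1 + θ * q.2) (p.1 + θ * p.2) ≤ ε} ∂ν ∂P :=
        lintegral_congr fun θ => lintegral_map_measure_closedBall ν (he θ) ε
    _ = ∫⁻ p, ∫⁻ q, P {θ | dist (q.1 + θ * q.2) (p.1 + θ * p.2) ≤ ε} ∂ν ∂ν := by
        rw [lintegral_lintegral_swap (measurable_measure_prodMk_left hS).aemeasurable]
        refine lintegral_congr fun p => ?_
        have hSp : MeasurableSet
            {z : ℝ × ℝ × ℝ | dist (z.2.1 + z.1 * z.2.2) (p.1 + z.1 * p.2) ≤ ε} :=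
          measurableSet_le (by fun_prop) measurable_const
        exact (Measure.prod_apply hSp).symm.trans (Measure.prod_apply_symm hSp)
    _ ≤ ∫⁻ _, C * ENNReal.ofReal (2 ^ (1 + α) * ε) * L ∂ν :=
        lintegral_mono fun p => lintegral_prod_volume_restrict_Ioc_dist_le hα₀ hα₁ hμ₁ hμ₂ hε p
    _ = μ₁ univ * μ₂ univ * (C * ENNReal.ofReal (2 ^ (1 + α)) * L) * ENNReal.ofReal ε := by
        rw [lintegral_const, ← univ_prod_univ, Measure.prod_prod,
          ENNReal.ofReal_mul (by positivity)]
        ring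

end Projections

/-- If `α > 1/2` and `μ₁, μ₂` are finite uniformly `α`-Hölder continuous
Borel measures on `ℝ`, then for Lebesgue-a.e. `θ ∈ (0,1]` the convolution
`μ₁ ∗ (S_θ μ₂)`, where `S_θ μ₂` is the pushforward of `μ₂` under `x ↦ θ x`, is
absolutely continuous with respect to Lebesgue measure. -/
theorem conv_scaled_holder_ae_absolutelyContinuous
    (α : ℝ) (hα : 1/2 < α) (μ₁ μ₂ : Measure ℝ)
    [IsFiniteMeasure μ₁] [IsFiniteMeasure μ₂]
    (h₁ : UniformlyHolder α μ₁) (h₂ : UniformlyHolder α μ₂) :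
    ∀ᵐ θ ∂((volume : Measure ℝ).restrict (Ioc (0:ℝ) 1)),
      (Measure.conv μ₁ (Measure.map (fun x : ℝ => θ * x) μ₂)) ≪ (volume : Measure ℝ) := by
  obtain ⟨β, hβ, hβ1, hβα⟩ : ∃ β, 1 / 2 < β ∧ β < 1 ∧ β ≤ α :=
    ⟨min α (3 / 4), lt_min hα (by norm_num), (min_le_right _ _).trans_lt (by norm_num),
      min_le_left _ _⟩
  obtain ⟨C₁, hC₁⟩ := (h₁.mono_exponent (by linarith) hβα).exists_measure_closedBall_le (by linarith)
  obtain ⟨C₂, hC₂⟩ := (h₂.mono_exponent (by linarith) hβα).exists_measure_closedBall_le (by linarith)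
  have : NullSingletonClass μ₂ := nullSingletonClass_of_measure_closedBall_le (by linarith) hC₂
  have hL (b : ℝ) : ∫⁻ y, ENNReal.ofReal (dist y b ^ (β - 1)) ∂μ₂ ≤
      μ₂ univ + C₂ * ENNReal.ofReal ((1 - β) / (β - (1 - β))) := by
    simpa only [neg_sub] using
      lintegral_dist_rpow_neg_le (s := 1 - β) (by linarith) (by linarith) hC₂ b
  simp_rw [conv_map_const_mul_eq_map_prod]
  exact ae_absolutelyContinuous_map_of_lintegral_measure_closedBall_le
    (e := fun θ (p : ℝ × ℝ) => p.1 + θ * p.2) (by fun_prop) (by finiteness)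
    fun r hr => lintegral_Ioc_lintegral_measure_closedBall_map_le (by linarith) hβ1.le hC₁ hL hr.le
end
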